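/- arXiv:2410.22294 — 3 statements merged into one kernel-verified Lean document; each statement's English description precedes it below -/
import Mathlib

section
/- Let d ∈ ℕ, d ≥ 2, and for θ ∈ ℝ let R_θ : ℝ^d → ℝ^d be the linear map rotating the first two coordinates by angle θ (anticlockwise) and fixing the remaining coordinates. Then: (i) for all θ₁, θ₂ ∈ ℝ and y ∈ ℝ^d, ‖R_{θ₂}(y) − R_{θ₁}(y)‖ ≤ π·|θ₂ − θ₁|·‖y‖; (ii) if t₀ > 0 and ψ : [0, ∞) → ℝ is a Lipschitz function with ψ(t) = 0 for all t ≥ t₀, then the mapping Φ : ℝ^d → ℝ^d defined by Φ(x) = R_{ψ(‖x‖)}(x) is (π·Lip(ψ)·t₀ + 1)-bilipschitz and satisfies Φ(x) = x for all x ∈ ℝ^d \ B(0, t₀). -/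
noncomputable section

/-- `f` is `M`-bilipschitz on the set `s`. -/
def IsBilipOn {α β : Type*} [PseudoMetricSpace α] [PseudoMetricSpace β]
    (M : ℝ) (f : α → β) (s : Set α) : Prop :=
  ∀ x ∈ s, ∀ y ∈ s,
    (1 / M) * dist x y ≤ dist (f x) (f y) ∧ dist (f x) (f y) ≤ M * dist x y

/-- The linear map `R_θ : ℝ^d → ℝ^d` rotating the first two coordinates
anticlockwise by the angle `θ` and fixing the remaining coordinates. -/
def rot {d : ℕ} (hd : 2 ≤ d) (θ : ℝ) (x : EuclideanSpace ℝ (Fin d)) :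
    EuclideanSpace ℝ (Fin d) := WithLp.toLp 2 fun i =>
  if i = (⟨0, by omega⟩ : Fin d) then
    Real.cos θ * x ⟨0, by omega⟩ - Real.sin θ * x ⟨1, by omega⟩
  else if i = (⟨1, by omega⟩ : Fin d) then
    Real.sin θ * x ⟨0, by omega⟩ + Real.cos θ * x ⟨1, by omega⟩
  else x i

/-! Rotations are linear isometries, and `R_θ y - y` lives in the first two coordinates, where
its squared length is `2 (1 - cos θ) (y₀² + y₁²) ≤ θ² ‖y‖²`; this gives (i), even without the
factor `π`. For (ii), the triangle inequality through `R_{ψ ‖x‖} y` or `R_{ψ ‖y‖} x` bounds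
`‖Φ x - Φ y‖` by `‖x - y‖ + |ψ ‖x‖ - ψ ‖y‖| · min ‖x‖ ‖y‖`, and the second term is at most
`Lip(ψ) t₀ ‖x - y‖` because it vanishes once both norms exceed `t₀`. As `Φ` preserves norms, its
inverse is the map built from `-ψ`, which satisfies the same upper bound. -/

open Real Finset

section Rotation

variable {d : ℕ} (hd : 2 ≤ d)

local notation "e₀" => (⟨0, by omega⟩ : Fin d)
local notation "e₁" => (⟨1, by omega⟩ : Fin d)

lemma rot_apply_of_ne (θ : ℝ) (x : EuclideanSpace ℝ (Fin d)) {i : Fin d} (h₀ : i ≠ e₀)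
    (h₁ : i ≠ e₁) : rot hd θ x i = x i := by
  simp [rot, h₀, h₁]

lemma rot_zero (x : EuclideanSpace ℝ (Fin d)) : rot hd 0 x = x := by
  ext i
  simp only [rot, cos_zero, sin_zero, PiLp.toLp_apply]
  split_ifs <;> simp_all

lemma rot_rot (θ φ : ℝ) (x : EuclideanSpace ℝ (Fin d)) :
    rot hd θ (rot hd φ x) = rot hd (θ + φ) x := by
  ext i
  simp only [rot, cos_add, sin_add, PiLp.toLp_apply, Fin.ext_iff, one_ne_zero, if_false, if_true]
  split_ifs <;> ring

lemma rot_sub (θ : ℝ) (x y : EuclideanSpace ℝ (Fin d)) :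
    rot hd θ (x - y) = rot hd θ x - rot hd θ y := by
  ext i
  simp only [rot, PiLp.sub_apply, PiLp.toLp_apply]
  split_ifs <;> ring

lemma norm_sq_eq_sq_add_sq_add_sum (x : EuclideanSpace ℝ (Fin d)) :
    ‖x‖ ^ 2 = x e₀ ^ 2 + x e₁ ^ 2 + ∑ i ∈ (univ.erase e₀).erase e₁, x i ^ 2 := by
  have h₁ : e₁ ∈ univ.erase e₀ := by simp [Fin.ext_iff]
  rw [EuclideanSpace.real_norm_sq_eq, ← add_sum_erase _ _ (mem_univ e₀),
    ← add_sum_erase _ _ h₁, add_assoc]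

lemma sum_off_plane_rot (θ : ℝ) (x : EuclideanSpace ℝ (Fin d)) (f : ℝ → ℝ) :
    ∑ i ∈ (univ.erase e₀).erase e₁, f (rot hd θ x i) = ∑ i ∈ (univ.erase e₀).erase e₁, f (x i) :=
  sum_congr rfl fun i hi => by
    rw [mem_erase, mem_erase] at hi
    rw [rot_apply_of_ne hd θ x hi.2.1 hi.1]

lemma norm_rot (θ : ℝ) (x : EuclideanSpace ℝ (Fin d)) : ‖rot hd θ x‖ = ‖x‖ := by
  refine (sq_eq_sq₀ (norm_nonneg _) (norm_nonneg _)).1 ?_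
  rw [norm_sq_eq_sq_add_sq_add_sum hd, norm_sq_eq_sq_add_sq_add_sum hd x,
    sum_off_plane_rot hd θ x (· ^ 2)]
  simp only [rot, PiLp.toLp_apply, Fin.ext_iff, one_ne_zero, if_false, if_true]
  linear_combination (x e₀ ^ 2 + x e₁ ^ 2) * sin_sq_add_cos_sq θ

lemma dist_rot (θ : ℝ) (x y : EuclideanSpace ℝ (Fin d)) :
    dist (rot hd θ x) (rot hd θ y) = dist x y := by
  rw [dist_eq_norm, dist_eq_norm, ← rot_sub, norm_rot]

lemma norm_rot_sub_self_le (θ : ℝ) (x : EuclideanSpace ℝ (Fin d)) :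
    ‖rot hd θ x - x‖ ≤ |θ| * ‖x‖ := by
  have hoff : ∑ i ∈ (univ.erase e₀).erase e₁, (rot hd θ x - x) i ^ 2 = 0 :=
    sum_eq_zero fun i hi => by
      rw [mem_erase, mem_erase] at hi
      rw [PiLp.sub_apply, rot_apply_of_ne hd θ x hi.2.1 hi.1, sub_self, sq, mul_zero]
  have hplane : ‖rot hd θ x - x‖ ^ 2 = 2 * (1 - cos θ) * (x e₀ ^ 2 + x e₁ ^ 2) := by
    rw [norm_sq_eq_sq_add_sq_add_sum hd, hoff]
    simp only [PiLp.sub_apply, rot, Fin.ext_iff, one_ne_zero, if_false, if_true]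
    linear_combination (x e₀ ^ 2 + x e₁ ^ 2) * sin_sq_add_cos_sq θ
  have hx : x e₀ ^ 2 + x e₁ ^ 2 ≤ ‖x‖ ^ 2 := by
    rw [norm_sq_eq_sq_add_sq_add_sum hd x]
    exact le_add_of_nonneg_right (sum_nonneg fun i _ => sq_nonneg _)
  have hcos : 2 * (1 - cos θ) ≤ θ ^ 2 := by linarith [one_sub_sq_div_two_le_cos (x := θ)]
  refine le_of_pow_le_pow_left₀ two_ne_zero (by positivity) ?_
  calc ‖rot hd θ x - x‖ ^ 2 = 2 * (1 - cos θ) * (x e₀ ^ 2 + x e₁ ^ 2) := hplane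
    _ ≤ θ ^ 2 * ‖x‖ ^ 2 := by gcongr
    _ = (|θ| * ‖x‖) ^ 2 := by rw [mul_pow, sq_abs]

lemma dist_rot_rot_le (θ φ : ℝ) (x : EuclideanSpace ℝ (Fin d)) :
    dist (rot hd θ x) (rot hd φ x) ≤ |θ - φ| * ‖x‖ := by
  calc dist (rot hd θ x) (rot hd φ x)
      = dist (rot hd φ (rot hd (θ - φ) x)) (rot hd φ x) := by rw [rot_rot, add_sub_cancel]
    _ = ‖rot hd (θ - φ) x - x‖ := by rw [dist_rot, dist_eq_norm]
    _ ≤ |θ - φ| * ‖x‖ := norm_rot_sub_self_le hd _ x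

lemma dist_rot_rot_le_add (θ φ : ℝ) (x y : EuclideanSpace ℝ (Fin d)) :
    dist (rot hd θ x) (rot hd φ y) ≤ dist x y + |θ - φ| * min ‖x‖ ‖y‖ := by
  rcases min_choice ‖x‖ ‖y‖ with h | h <;> rw [h]
  · calc dist (rot hd θ x) (rot hd φ y)
        ≤ dist (rot hd θ x) (rot hd φ x) + dist (rot hd φ x) (rot hd φ y) := dist_triangle _ _ _
      _ ≤ dist x y + |θ - φ| * ‖x‖ := by
        rw [dist_rot, add_comm]; gcongr; exact dist_rot_rot_le hd θ φ x
  · calc dist (rot hd θ x) (rot hd φ y)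
        ≤ dist (rot hd θ x) (rot hd θ y) + dist (rot hd θ y) (rot hd φ y) := dist_triangle _ _ _
      _ ≤ dist x y + |θ - φ| * ‖y‖ := by
        rw [dist_rot]; gcongr; exact dist_rot_rot_le hd θ φ y

end Rotation

lemma IsBilipOn.mono {α β : Type*} [PseudoMetricSpace α] [PseudoMetricSpace β] {M M' : ℝ}
    {f : α → β} {s : Set α} (hf : IsBilipOn M f s) (hM : 0 < M) (hMM' : M ≤ M') :
    IsBilipOn M' f s := fun x hx y hy =>
  ⟨le_trans (by gcongr) (hf x hx y hy).1, (hf x hx y hy).2.trans (by gcongr)⟩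

section Bilipschitz

variable {ψ : ℝ → ℝ} {L t₀ : ℝ}

lemma abs_sub_mul_min_le (hL : 0 ≤ L) (ht₀ : 0 ≤ t₀)
    (hlip : ∀ s ∈ Set.Ici (0 : ℝ), ∀ t ∈ Set.Ici (0 : ℝ), |ψ s - ψ t| ≤ L * |s - t|)
    (hzero : ∀ t, t₀ ≤ t → ψ t = 0) {s t : ℝ} (hs : 0 ≤ s) (ht : 0 ≤ t) :
    |ψ s - ψ t| * min s t ≤ L * t₀ * |s - t| := by
  rcases le_or_gt (min s t) t₀ with hmin | hmin
  · calc |ψ s - ψ t| * min s t ≤ L * |s - t| * t₀ :=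
          mul_le_mul (hlip s hs t ht) hmin (le_min hs ht) (by positivity)
      _ = L * t₀ * |s - t| := by ring
  · rw [hzero s (hmin.trans_le (min_le_left s t)).le, hzero t (hmin.trans_le (min_le_right s t)).le,
      sub_self, abs_zero, zero_mul]
    positivity

variable {d : ℕ} (hd : 2 ≤ d)

def radialRot (ψ : ℝ → ℝ) (x : EuclideanSpace ℝ (Fin d)) :
    EuclideanSpace ℝ (Fin d) :=
  rot hd (ψ ‖x‖) x

lemma radialRot_neg_radialRot (ψ : ℝ → ℝ) (x : EuclideanSpace ℝ (Fin d)) :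
    radialRot hd (-ψ) (radialRot hd ψ x) = x := by
  simp only [radialRot, norm_rot, Pi.neg_apply, rot_rot, neg_add_cancel, rot_zero]

lemma dist_radialRot_le (hL : 0 ≤ L) (ht₀ : 0 ≤ t₀)
    (hlip : ∀ s ∈ Set.Ici (0 : ℝ), ∀ t ∈ Set.Ici (0 : ℝ), |ψ s - ψ t| ≤ L * |s - t|)
    (hzero : ∀ t, t₀ ≤ t → ψ t = 0) (x y : EuclideanSpace ℝ (Fin d)) :
    dist (radialRot hd ψ x) (radialRot hd ψ y) ≤ (L * t₀ + 1) * dist x y :=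
  calc dist (radialRot hd ψ x) (radialRot hd ψ y)
      ≤ dist x y + |ψ ‖x‖ - ψ ‖y‖| * min ‖x‖ ‖y‖ := dist_rot_rot_le_add hd _ _ x y
    _ ≤ dist x y + L * t₀ * |‖x‖ - ‖y‖| := by
      grw [abs_sub_mul_min_le hL ht₀ hlip hzero (norm_nonneg x) (norm_nonneg y)]
    _ ≤ dist x y + L * t₀ * dist x y := by
      gcongr; rw [dist_eq_norm]; exact abs_norm_sub_norm_le x y
    _ = (L * t₀ + 1) * dist x y := by ring

lemma isBilipOn_radialRot (hL : 0 ≤ L) (ht₀ : 0 ≤ t₀)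
    (hlip : ∀ s ∈ Set.Ici (0 : ℝ), ∀ t ∈ Set.Ici (0 : ℝ), |ψ s - ψ t| ≤ L * |s - t|)
    (hzero : ∀ t, t₀ ≤ t → ψ t = 0) :
    IsBilipOn (L * t₀ + 1) (radialRot hd ψ) Set.univ := by
  intro x _ y _
  refine ⟨?_, dist_radialRot_le hd hL ht₀ hlip hzero x y⟩
  have hlip_neg : ∀ s ∈ Set.Ici (0 : ℝ), ∀ t ∈ Set.Ici (0 : ℝ),
      |(-ψ) s - (-ψ) t| ≤ L * |s - t| := fun s hs t ht => by
    rw [Pi.neg_apply, Pi.neg_apply, neg_sub_neg, abs_sub_comm]; exact hlip s hs t ht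
  have hzero_neg : ∀ t, t₀ ≤ t → (-ψ) t = 0 := fun t ht => by
    rw [Pi.neg_apply, hzero t ht, neg_zero]
  have hinv := dist_radialRot_le hd hL ht₀ hlip_neg hzero_neg (radialRot hd ψ x) (radialRot hd ψ y)
  rw [radialRot_neg_radialRot, radialRot_neg_radialRot] at hinv
  rw [one_div, inv_mul_le_iff₀ (by positivity)]
  exact hinv

lemma radialRot_eq_self_of_le (hzero : ∀ t, t₀ ≤ t → ψ t = 0) {x : EuclideanSpace ℝ (Fin d)}
    (hx : t₀ ≤ ‖x‖) : radialRot hd ψ x = x := by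
  rw [radialRot, hzero _ hx, rot_zero]

end Bilipschitz

theorem stmt15 (d : ℕ) (hd : 2 ≤ d) :
    (∀ θ₁ θ₂ : ℝ, ∀ y : EuclideanSpace ℝ (Fin d),
      dist (rot hd θ₂ y) (rot hd θ₁ y) ≤ Real.pi * |θ₂ - θ₁| * ‖y‖) ∧
    (∀ t₀ : ℝ, 0 < t₀ → ∀ ψ : ℝ → ℝ, ∀ Lψ : ℝ, 0 ≤ Lψ →
      (∀ s ∈ Set.Ici (0 : ℝ), ∀ t ∈ Set.Ici (0 : ℝ), |ψ s - ψ t| ≤ Lψ * |s - t|) →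
      (∀ t : ℝ, t₀ ≤ t → ψ t = 0) →
      IsBilipOn (Real.pi * Lψ * t₀ + 1)
        (fun x : EuclideanSpace ℝ (Fin d) => rot hd (ψ ‖x‖) x) Set.univ ∧
      ∀ x : EuclideanSpace ℝ (Fin d), x ∉ Metric.ball 0 t₀ → rot hd (ψ ‖x‖) x = x) := by
  have one_le_pi : 1 ≤ π := by linarith [pi_gt_three]
  refine ⟨fun θ₁ θ₂ y => ?_, fun t₀ ht₀ ψ L hL hlip hzero => ⟨?_, fun x hx => ?_⟩⟩
  · calc dist (rot hd θ₂ y) (rot hd θ₁ y) ≤ |θ₂ - θ₁| * ‖y‖ := dist_rot_rot_le hd θ₂ θ₁ y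
      _ ≤ π * |θ₂ - θ₁| * ‖y‖ := by
        rw [mul_assoc]; exact le_mul_of_one_le_left (by positivity) one_le_pi
  · refine (isBilipOn_radialRot hd hL ht₀.le hlip hzero).mono (by positivity) ?_
    rw [mul_assoc]
    linarith [le_mul_of_one_le_left (mul_nonneg hL ht₀.le) one_le_pi]
  · exact radialRot_eq_self_of_le hd hzero (by simpa using hx)

end
end

section
/- Let d ∈ ℕ, d ≥ 2, let x, y ∈ ℝ^d with x ≠ y, and let 0 < r ≤ ‖y − x‖/2. Then there exists an (11·‖y − x‖²/r²)-bilipschitz mapping τ : ℝ^d → ℝ^d such that τ(z) = z for all z outside the open r-neighbourhood of the segment [x, y], τ(x) = y, and τ(y) = x. -/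
noncomputable section

open scoped RealInnerProductSpace
open Real

lemma sin_lip' (a b : ℝ) : |Real.sin a - Real.sin b| ≤ |a - b| := by
  rw [Real.sin_sub_sin, abs_mul, abs_mul]
  have h1 : |Real.sin ((a - b)/2)| ≤ |a - b| / 2 := by
    simpa [abs_div] using Real.abs_sin_le_abs (x := (a - b)/2)
  have h2 : |Real.cos ((a + b)/2)| ≤ 1 := Real.abs_cos_le_one _
  have h3 : (0:ℝ) ≤ |Real.sin ((a - b)/2)| := abs_nonneg _
  have h4 : (0:ℝ) ≤ |a - b| := abs_nonneg _
  rw [abs_two]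
  nlinarith
lemma cos_lip' (a b : ℝ) : |Real.cos a - Real.cos b| ≤ |a - b| := by
  rw [Real.cos_sub_cos, abs_mul, abs_mul]
  have h1 : |Real.sin ((a - b)/2)| ≤ |a - b| / 2 := by
    simpa [abs_div] using Real.abs_sin_le_abs (x := (a - b)/2)
  have h2 : |Real.sin ((a + b)/2)| ≤ 1 := Real.abs_sin_le_one _
  have h3 : (0:ℝ) ≤ |Real.sin ((a - b)/2)| := abs_nonneg _
  have h4 : (0:ℝ) ≤ |a - b| := abs_nonneg _
  rw [show |(-2:ℝ)| = 2 by norm_num]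
  nlinarith

variable {E : Type*} [NormedAddCommGroup E] [InnerProductSpace ℝ E]

/-- rotation by angle θ in the plane spanned by `u, e`. -/
def rotA (u e : E) (θ : ℝ) (z : E) : E :=
  z + (Real.cos θ - 1) • (⟪z, u⟫ • u + ⟪z, e⟫ • e)
    + Real.sin θ • (⟪z, u⟫ • e - ⟪z, e⟫ • u)

lemma rotA_zero (u e z : E) : rotA u e 0 z = z := by simp [rotA]

lemma rotA_sub (u e : E) (θ : ℝ) (p q : E) :
    rotA u e θ (p - q) = rotA u e θ p - rotA u e θ q := by
  simp only [rotA, inner_sub_left]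
  module

variable {u e : E}

lemma rotA_inner (huu : ⟪u,u⟫ = 1) (hee : ⟪e,e⟫ = 1) (hue : ⟪u,e⟫ = 0)
    (θ : ℝ) (z : E) : ⟪rotA u e θ z, rotA u e θ z⟫ = ⟪z, z⟫ := by
  have heu : ⟪e,u⟫ = 0 := by rw [real_inner_comm]; exact hue
  have hzu : ⟪u,z⟫ = ⟪z,u⟫ := real_inner_comm z u
  have hze : ⟪e,z⟫ = ⟪z,e⟫ := real_inner_comm z e
  simp only [rotA, inner_add_left, inner_add_right, inner_sub_left, inner_sub_right,
    real_inner_smul_left, real_inner_smul_right, huu, hee, hue, heu, hzu, hze]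
  ring_nf
  linear_combination (⟪z,u⟫^2 + ⟪z,e⟫^2) * (Real.sin_sq_add_cos_sq θ)

lemma rotA_norm (huu : ⟪u,u⟫ = 1) (hee : ⟪e,e⟫ = 1) (hue : ⟪u,e⟫ = 0)
    (θ : ℝ) (z : E) : ‖rotA u e θ z‖ = ‖z‖ := by
  have h := rotA_inner huu hee hue θ z
  rw [real_inner_self_eq_norm_sq, real_inner_self_eq_norm_sq] at h
  have h2 := congrArg Real.sqrt h
  rwa [Real.sqrt_sq (norm_nonneg _), Real.sqrt_sq (norm_nonneg _)] at h2

lemma rotA_neg_rotA (huu : ⟪u,u⟫ = 1) (hee : ⟪e,e⟫ = 1) (hue : ⟪u,e⟫ = 0)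
    (θ : ℝ) (z : E) : rotA u e (-θ) (rotA u e θ z) = z := by
  have heu : ⟪e,u⟫ = 0 := by rw [real_inner_comm]; exact hue
  have hzu : ⟪u,z⟫ = ⟪z,u⟫ := real_inner_comm z u
  have hze : ⟪e,z⟫ = ⟪z,e⟫ := real_inner_comm z e
  simp only [rotA, inner_add_left, inner_add_right, inner_sub_left, inner_sub_right,
    real_inner_smul_left, real_inner_smul_right, huu, hee, hue, heu, hzu, hze,
    Real.cos_neg, Real.sin_neg]
  match_scalars
  · ring
  · linear_combination (⟪z,u⟫) * (Real.sin_sq_add_cos_sq θ)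
  · linear_combination (⟪z,e⟫) * (Real.sin_sq_add_cos_sq θ)

lemma rotA_diff (huu : ⟪u,u⟫ = 1) (hee : ⟪e,e⟫ = 1) (hue : ⟪u,e⟫ = 0)
    (θ₁ θ₂ : ℝ) (z : E) :
    ‖rotA u e θ₁ z - rotA u e θ₂ z‖ ≤ Real.sqrt 2 * |θ₁ - θ₂| * ‖z‖ := by
  have heu : ⟪e,u⟫ = 0 := by rw [real_inner_comm]; exact hue
  have hzu : ⟪u,z⟫ = ⟪z,u⟫ := real_inner_comm z u
  have hze : ⟪e,z⟫ = ⟪z,e⟫ := real_inner_comm z e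
  have hsq : ‖rotA u e θ₁ z - rotA u e θ₂ z‖^2
      = ((Real.cos θ₁ - Real.cos θ₂)^2 + (Real.sin θ₁ - Real.sin θ₂)^2)
        * (⟪z,u⟫^2 + ⟪z,e⟫^2) := by
    rw [← real_inner_self_eq_norm_sq]
    simp only [rotA, inner_add_left, inner_add_right, inner_sub_left, inner_sub_right,
      real_inner_smul_left, real_inner_smul_right, huu, hee, hue, heu, hzu, hze]
    ring
  have hbessel : ⟪z,u⟫^2 + ⟪z,e⟫^2 ≤ ‖z‖^2 := by
    have h0 : (0:ℝ) ≤ ⟪z - ⟪z,u⟫ • u - ⟪z,e⟫ • e, z - ⟪z,u⟫ • u - ⟪z,e⟫ • e⟫ :=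
      real_inner_self_nonneg
    simp only [inner_sub_left, inner_sub_right, real_inner_smul_left, real_inner_smul_right,
      huu, hee, hue, heu, hzu, hze] at h0
    rw [← real_inner_self_eq_norm_sq]
    nlinarith [h0]
  have hc := cos_lip' θ₁ θ₂
  have hs := sin_lip' θ₁ θ₂
  have h2 : ‖rotA u e θ₁ z - rotA u e θ₂ z‖^2 ≤ (Real.sqrt 2 * |θ₁ - θ₂| * ‖z‖)^2 := by
    rw [hsq, mul_pow, mul_pow, Real.sq_sqrt (by norm_num : (0:ℝ) ≤ 2), sq_abs]
    have hc2 : (Real.cos θ₁ - Real.cos θ₂)^2 ≤ (θ₁ - θ₂)^2 := by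
      rw [← sq_abs (Real.cos θ₁ - Real.cos θ₂), ← sq_abs (θ₁ - θ₂)]
      exact pow_le_pow_left₀ (abs_nonneg _) hc 2
    have hs2 : (Real.sin θ₁ - Real.sin θ₂)^2 ≤ (θ₁ - θ₂)^2 := by
      rw [← sq_abs (Real.sin θ₁ - Real.sin θ₂), ← sq_abs (θ₁ - θ₂)]
      exact pow_le_pow_left₀ (abs_nonneg _) hs 2
    have hW0 : (0:ℝ) ≤ ⟪z,u⟫^2 + ⟪z,e⟫^2 := by positivity
    nlinarith [mul_le_mul_of_nonneg_right (add_le_add hc2 hs2) hW0,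
      mul_le_mul_of_nonneg_left hbessel (by positivity : (0:ℝ) ≤ 2*(θ₁-θ₂)^2)]
  have h3 := Real.sqrt_le_sqrt h2
  rwa [Real.sqrt_sq (norm_nonneg _), Real.sqrt_sq (by positivity)] at h3

/-- shear along `u` measured from basepoint `m`. -/
def shear (u m : E) (c : ℝ) (z : E) : E := z + (c * ⟪z - m, u⟫) • u

lemma shear_comp (huu : ⟪u,u⟫ = 1) {c c' : ℝ} (h : c + c' + c * c' = 0) (m z : E) :
    shear u m c (shear u m c' z) = z := by
  have h1 : ⟪z + (c' * ⟪z - m, u⟫) • u - m, u⟫ = (1 + c') * ⟪z - m, u⟫ := by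
    simp only [inner_sub_left, inner_add_left, real_inner_smul_left, huu]
    ring
  simp only [shear, h1]
  match_scalars
  · ring
  · linear_combination ⟪z - m, u⟫ * h

lemma shear_norm_le (huu : ⟪u,u⟫ = 1) {c : ℝ} (hc : -1 ≤ c) (m z w : E) :
    ‖shear u m c z - shear u m c w‖ ≤ max 1 (1 + c) * ‖z - w‖ := by
  have hnu : ‖u‖ = 1 := by
    have h := real_inner_self_eq_norm_sq u
    rw [huu] at h
    have h2 := congrArg Real.sqrt h.symm
    rwa [Real.sqrt_sq (norm_nonneg _), Real.sqrt_one] at h2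
  have hv : shear u m c z - shear u m c w = (z - w) + (c * ⟪z - w, u⟫) • u := by
    simp only [shear, inner_sub_left]
    module
  have ht : ⟪z - w, u⟫^2 ≤ ‖z - w‖^2 := by
    have h := abs_real_inner_le_norm (z - w) u
    rw [hnu, mul_one] at h
    rw [← sq_abs (⟪z - w, u⟫)]
    exact pow_le_pow_left₀ (abs_nonneg _) h 2
  have hsq : ‖(z - w) + (c * ⟪z - w, u⟫) • u‖^2
      = ‖z - w‖^2 + (2*c + c^2) * ⟪z - w, u⟫^2 := by
    rw [norm_add_sq_real, real_inner_smul_right, norm_smul, Real.norm_eq_abs, hnu, mul_one,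
      sq_abs]
    ring
  have hK : (0:ℝ) ≤ max 1 (1 + c) := le_trans zero_le_one (le_max_left _ _)
  have h2 : ‖(z - w) + (c * ⟪z - w, u⟫) • u‖^2 ≤ (max 1 (1 + c) * ‖z - w‖)^2 := by
    rw [hsq, mul_pow]
    rcases le_total c 0 with h|h
    · rw [max_eq_left (by linarith)]
      nlinarith [sq_nonneg (⟪z - w, u⟫), sq_nonneg (1 + c),
        mul_nonneg (mul_nonneg (neg_nonneg.2 h) (by linarith : (0:ℝ) ≤ 2 + c))
          (sq_nonneg (⟪z - w, u⟫))]
    · rw [max_eq_right (by linarith)]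
      nlinarith [ht, sq_nonneg ‖z - w‖]
  rw [hv]
  have h3 := Real.sqrt_le_sqrt h2
  rwa [Real.sqrt_sq (norm_nonneg _), Real.sqrt_sq (by positivity)] at h3

lemma sigma_lip (huu : ⟪u,u⟫ = 1) (hee : ⟪e,e⟫ = 1) (hue : ⟪u,e⟫ = 0)
    (θf : ℝ → ℝ) (Rr L : ℝ) (hRr : 0 ≤ Rr) (hL : 0 ≤ L)
    (hsupp : ∀ ρ, Rr ≤ ρ → θf ρ = 0)
    (hlip : ∀ ρ₁ ρ₂, |θf ρ₁ - θf ρ₂| ≤ L * |ρ₁ - ρ₂|) (p q : E) :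
    ‖rotA u e (θf ‖p‖) p - rotA u e (θf ‖q‖) q‖
      ≤ (1 + Real.sqrt 2 * L * Rr) * ‖p - q‖ := by
  have key : ∀ p q : E, ‖p‖ ≤ ‖q‖ →
      ‖rotA u e (θf ‖p‖) p - rotA u e (θf ‖q‖) q‖
        ≤ (1 + Real.sqrt 2 * L * Rr) * ‖p - q‖ := by
    intro p q hpq
    by_cases hp : Rr ≤ ‖p‖
    · rw [hsupp _ hp, hsupp _ (le_trans hp hpq), rotA_zero, rotA_zero]
      have h0 : (0:ℝ) ≤ Real.sqrt 2 * L * Rr := by positivity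
      nlinarith [norm_nonneg (p - q)]
    · push_neg at hp
      have hdecomp : rotA u e (θf ‖p‖) p - rotA u e (θf ‖q‖) q
          = (rotA u e (θf ‖p‖) p - rotA u e (θf ‖q‖) p) + rotA u e (θf ‖q‖) (p - q) := by
        rw [rotA_sub]; abel
      have hstep : ‖rotA u e (θf ‖p‖) p - rotA u e (θf ‖q‖) q‖
          ≤ Real.sqrt 2 * |θf ‖p‖ - θf ‖q‖| * ‖p‖ + ‖p - q‖ := by
        rw [hdecomp]
        refine le_trans (norm_add_le _ _) (add_le_add (rotA_diff huu hee hue _ _ p) ?_)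
        exact le_of_eq (rotA_norm huu hee hue _ _)
      have hθ : |θf ‖p‖ - θf ‖q‖| ≤ L * ‖p - q‖ :=
        le_trans (hlip _ _) (mul_le_mul_of_nonneg_left (abs_norm_sub_norm_le p q) hL)
      have habs : (0:ℝ) ≤ |θf ‖p‖ - θf ‖q‖| := abs_nonneg _
      have h1 : Real.sqrt 2 * |θf ‖p‖ - θf ‖q‖| * ‖p‖ ≤ Real.sqrt 2 * (L * ‖p - q‖) * Rr := by
        have s2 : (0:ℝ) ≤ Real.sqrt 2 := Real.sqrt_nonneg 2
        nlinarith [mul_le_mul hθ hp.le (norm_nonneg p) (mul_nonneg hL (norm_nonneg _))]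
      nlinarith [hstep, h1]
  rcases le_total ‖p‖ ‖q‖ with h|h
  · exact key p q h
  · rw [norm_sub_rev, norm_sub_rev p q]
    exact key q p h


lemma clamp_lip (mu : ℝ) (a b : ℝ) :
    |max 0 (min mu a) - max 0 (min mu b)| ≤ |a - b| := by
  have hmin : |min mu a - min mu b| ≤ |a - b| := by
    rcases le_total mu a with h|h <;> rcases le_total mu b with h'|h'
    · simp [min_eq_left h, min_eq_left h']
    · rw [min_eq_left h, min_eq_right h', abs_of_nonneg (by linarith)]
      calc mu - b ≤ a - b := by linarith
        _ ≤ |a - b| := le_abs_self _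
    · rw [min_eq_right h, min_eq_left h', abs_of_nonpos (by linarith)]
      calc -(a - mu) = mu - a := by ring
        _ ≤ b - a := by linarith
        _ ≤ |b - a| := le_abs_self _
        _ = |a - b| := abs_sub_comm _ _
    · simp [min_eq_right h, min_eq_right h']
  refine le_trans ?_ hmin
  rw [max_comm (0:ℝ) (min mu a), max_comm (0:ℝ) (min mu b)]
  exact abs_max_sub_max_le_abs (min mu a) (min mu b) 0

lemma norm_one_of_inner (u : E) (huu : ⟪u,u⟫ = 1) : ‖u‖ = 1 := by
  have h := real_inner_self_eq_norm_sq u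
  rw [huu] at h
  have h2 := congrArg Real.sqrt h.symm
  rwa [Real.sqrt_sq (norm_nonneg _), Real.sqrt_one] at h2

set_option maxHeartbeats 2000000 in
lemma capsule_mem (huu : ⟪u,u⟫ = 1) {x y m : E} {r D lam mu Rr : ℝ}
    (hr : 0 < r) (hD : 0 < D) (h2r : 2*r ≤ D)
    (hyx : y - x = D • u) (hmdef : m = x + (D/2) • u)
    (hlamdef : lam = r/D) (hmudef : mu = r^2/(2*D)) (hRdef : Rr = r/2 + mu)
    (z : E) (hz : ‖shear u m (lam - 1) z - m‖ < Rr) :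
    z ∈ ⋃ p ∈ segment ℝ x y, Metric.ball p r := by
  have hnu : ‖u‖ = 1 := norm_one_of_inner u huu
  have hmu0 : 0 < mu := by rw [hmudef]; positivity
  have hR0 : 0 < Rr := by rw [hRdef]; positivity
  have hmur : mu ≤ r/4 := by
    rw [hmudef, div_le_iff₀ (by positivity)]
    nlinarith
  have hRr34 : Rr ≤ 3*r/4 := by rw [hRdef]; linarith
  obtain ⟨t, htdef⟩ : ∃ t : ℝ, t = ⟪z - m, u⟫ := ⟨_, rfl⟩
  obtain ⟨w, hwdef⟩ : ∃ w : E, w = z - m - t • u := ⟨_, rfl⟩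
  have hwu : ⟪w, u⟫ = 0 := by
    rw [hwdef, inner_sub_left, real_inner_smul_left, huu, mul_one, ← htdef, sub_self]
  have horth : ∀ s : ℝ, ‖w + s • u‖^2 = ‖w‖^2 + s^2 := by
    intro s
    rw [norm_add_sq_real, real_inner_smul_right, hwu, mul_zero, norm_smul,
      Real.norm_eq_abs, hnu, mul_one, sq_abs]
    ring
  have hAz : shear u m (lam - 1) z - m = w + (lam * t) • u := by
    rw [hwdef]
    simp only [shear, ← htdef]
    module
  have hlt : ‖w‖^2 + (lam * t)^2 < Rr^2 := by
    have h2 := pow_lt_pow_left₀ hz (norm_nonneg _) (two_ne_zero)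
    rwa [hAz, horth] at h2
  have hlt' : ‖w‖^2 * D^2 + r^2 * t^2 < (D*r/2 + r^2/2)^2 := by
    have h := mul_lt_mul_of_pos_right hlt (by positivity : (0:ℝ) < D^2)
    have e1 : (‖w‖^2 + (lam*t)^2) * D^2 = ‖w‖^2*D^2 + r^2*t^2 := by
      rw [hlamdef]; field_simp
    have e2 : Rr^2 * D^2 = (D*r/2 + r^2/2)^2 := by
      rw [hRdef, hmudef]; field_simp
    rwa [e1, e2] at h
  have habs : |t| < (D + r)/2 := by
    have h1 : (r*t)^2 < (D*r/2 + r^2/2)^2 := by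
      nlinarith [mul_nonneg (sq_nonneg ‖w‖) (sq_nonneg D)]
    have h2 := abs_lt_of_sq_lt_sq' h1 (by positivity)
    rw [abs_lt]
    constructor
    · have h5 : r * (-((D+r)/2)) < r * t := by
        calc r * (-((D+r)/2)) = -(D*r/2 + r^2/2) := by ring
          _ < r*t := h2.1
      exact lt_of_mul_lt_mul_left h5 hr.le
    · have h4 : r * t < r * ((D+r)/2) := by
        calc r * t < D*r/2 + r^2/2 := h2.2
          _ = r * ((D+r)/2) := by ring
      exact lt_of_mul_lt_mul_left h4 hr.le
  have hD4 : 4*r^2 ≤ D^2 := by nlinarith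
  have hA : D*r^3*2 ≤ D^2*r^2 := by
    nlinarith [mul_nonneg (mul_nonneg (sub_nonneg.2 h2r) (sq_nonneg r)) hD.le]
  have hB : 4*r^4 ≤ r^2*D^2 := by
    nlinarith [mul_nonneg (sq_nonneg r) (by linarith : (0:ℝ) ≤ D^2 - 4*r^2)]
  obtain ⟨tc, htcdef⟩ : ∃ tc : ℝ, tc = max (-(D/2)) (min (D/2) t) := ⟨_, rfl⟩
  have htc1 : -(D/2) ≤ tc := htcdef ▸ le_max_left _ _
  have htc2 : tc ≤ D/2 := htcdef ▸ max_le (by linarith) (min_le_left _ _)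
  refine Set.mem_iUnion₂.2 ⟨m + tc • u, ?_, ?_⟩
  · rw [segment_eq_image']
    refine ⟨(tc + D/2)/D, ⟨div_nonneg (by linarith) hD.le, (div_le_one hD).2 (by linarith)⟩, ?_⟩
    show x + ((tc + D/2)/D) • (y - x) = m + tc • u
    rw [hyx, smul_smul, div_mul_cancel₀ _ hD.ne', hmdef]
    module
  · rw [Metric.mem_ball, dist_eq_norm]
    have hzp : z - (m + tc • u) = w + (t - tc) • u := by rw [hwdef]; module
    have hd2 : ‖z - (m + tc • u)‖^2 = ‖w‖^2 + (t - tc)^2 := by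
      rw [hzp, horth]
    have hgoal2 : ‖w‖^2 + (t - tc)^2 < r^2 := by
      rcases le_or_gt t (D/2) with hta|hta
      · rcases le_or_gt (-(D/2)) t with htb|htb
        · have htc : tc = t := by rw [htcdef, min_eq_right hta, max_eq_right htb]
          rw [htc, sub_self]
          nlinarith [hlt, sq_nonneg (lam*t), mul_self_le_mul_self hR0.le hRr34, hr, hR0]
        · have htc : tc = -(D/2) := by
            rw [htcdef, min_eq_right (by linarith), max_eq_left (by linarith)]
          rw [htc]
          have hb1 : -((D+r)/2) < t := by
            have h := (abs_lt.1 habs).1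
            linarith
          have ht2 : (D/2)^2 ≤ t^2 := by nlinarith
          have hα2 : (t - -(D/2))^2 ≤ (r/2)^2 := by nlinarith
          refine lt_of_mul_lt_mul_left ?_ (sq_nonneg D)
          nlinarith [hlt', mul_le_mul_of_nonneg_left hα2 (sq_nonneg D),
            mul_le_mul_of_nonneg_left ht2 (sq_nonneg r), hA, hB, sq_nonneg ‖w‖]
      · have htc : tc = D/2 := by
          rw [htcdef, min_eq_left hta.le, max_eq_right (by linarith)]
        rw [htc]
        have hb1 : t < (D+r)/2 := by
          have h := (abs_lt.1 habs).2
          linarith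
        have ht2 : (D/2)^2 ≤ t^2 := by nlinarith
        have hα2 : (t - D/2)^2 ≤ (r/2)^2 := by nlinarith
        refine lt_of_mul_lt_mul_left ?_ (sq_nonneg D)
        nlinarith [hlt', mul_le_mul_of_nonneg_left hα2 (sq_nonneg D),
          mul_le_mul_of_nonneg_left ht2 (sq_nonneg r), hA, hB, sq_nonneg ‖w‖]
    nlinarith [norm_nonneg (z - (m + tc • u)), hd2, hgoal2, hr]

set_option maxHeartbeats 1000000 in
lemma lipF (huu : ⟪u,u⟫ = 1) (hee : ⟪e,e⟫ = 1) (hue : ⟪u,e⟫ = 0)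
    {m : E} {lam mu Rr M : ℝ} (hlam0 : 0 < lam) (hlam1 : lam ≤ 1)
    (hmu0 : 0 < mu) (hR0 : 0 < Rr)
    (g : ℝ → ℝ) (hg1 : ∀ ρ, Rr ≤ ρ → g ρ = 0)
    (hg2 : ∀ ρ₁ ρ₂, |g ρ₁ - g ρ₂| ≤ (Real.pi/mu) * |ρ₁ - ρ₂|)
    (hscalar : lam⁻¹ * (1 + Real.sqrt 2 * (Real.pi/mu) * Rr) ≤ M)
    (a b : E) :
    ‖shear u m (lam⁻¹ - 1)
        (m + rotA u e (g ‖shear u m (lam - 1) a - m‖) (shear u m (lam - 1) a - m))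
      - shear u m (lam⁻¹ - 1)
        (m + rotA u e (g ‖shear u m (lam - 1) b - m‖) (shear u m (lam - 1) b - m))‖
      ≤ M * ‖a - b‖ := by
  have h1linv : (1:ℝ) ≤ lam⁻¹ := by
    nlinarith [mul_inv_cancel₀ hlam0.ne', inv_pos.2 hlam0, hlam1,
      mul_nonneg (inv_pos.2 hlam0).le (by linarith : (0:ℝ) ≤ 1 - lam)]
  have hcinv : -1 ≤ lam⁻¹ - 1 := by linarith
  have hc2 : -1 ≤ lam - 1 := by linarith
  obtain ⟨pa, hpa⟩ : ∃ pa : E, pa = shear u m (lam - 1) a - m := ⟨_, rfl⟩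
  obtain ⟨pb, hpb⟩ : ∃ pb : E, pb = shear u m (lam - 1) b - m := ⟨_, rfl⟩
  rw [← hpa, ← hpb]
  have step2 : ‖rotA u e (g ‖pa‖) pa - rotA u e (g ‖pb‖) pb‖
      ≤ (1 + Real.sqrt 2 * (Real.pi/mu) * Rr) * ‖pa - pb‖ :=
    sigma_lip huu hee hue g Rr (Real.pi/mu) hR0.le (by positivity) hg1 hg2 pa pb
  have step3 : ‖pa - pb‖ ≤ ‖a - b‖ := by
    have h := shear_norm_le huu hc2 m a b
    rw [show (1 : ℝ) + (lam - 1) = lam by ring, max_eq_left hlam1, one_mul] at h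
    calc ‖pa - pb‖ = ‖shear u m (lam-1) a - shear u m (lam-1) b‖ := by
          rw [hpa, hpb, sub_sub_sub_cancel_right]
      _ ≤ ‖a - b‖ := h
  have step1 : ‖shear u m (lam⁻¹ - 1) (m + rotA u e (g ‖pa‖) pa)
      - shear u m (lam⁻¹ - 1) (m + rotA u e (g ‖pb‖) pb)‖
      ≤ lam⁻¹ * ‖rotA u e (g ‖pa‖) pa - rotA u e (g ‖pb‖) pb‖ := by
    have h := shear_norm_le huu hcinv m
      (m + rotA u e (g ‖pa‖) pa) (m + rotA u e (g ‖pb‖) pb)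
    rwa [show (1 : ℝ) + (lam⁻¹ - 1) = lam⁻¹ by ring, max_eq_right h1linv,
      add_sub_add_left_eq_sub] at h
  have hM0 : (0:ℝ) ≤ 1 + Real.sqrt 2 * (Real.pi/mu) * Rr := by positivity
  calc ‖shear u m (lam⁻¹ - 1) (m + rotA u e (g ‖pa‖) pa)
        - shear u m (lam⁻¹ - 1) (m + rotA u e (g ‖pb‖) pb)‖
      ≤ lam⁻¹ * ‖rotA u e (g ‖pa‖) pa - rotA u e (g ‖pb‖) pb‖ := step1
    _ ≤ lam⁻¹ * ((1 + Real.sqrt 2 * (Real.pi/mu) * Rr) * ‖pa - pb‖) :=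
        mul_le_mul_of_nonneg_left step2 (by positivity)
    _ ≤ lam⁻¹ * ((1 + Real.sqrt 2 * (Real.pi/mu) * Rr) * ‖a - b‖) := by
        refine mul_le_mul_of_nonneg_left (mul_le_mul_of_nonneg_left step3 hM0) ?_
        positivity
    _ = (lam⁻¹ * (1 + Real.sqrt 2 * (Real.pi/mu) * Rr)) * ‖a - b‖ := by ring
    _ ≤ M * ‖a - b‖ := mul_le_mul_of_nonneg_right hscalar (norm_nonneg _)

set_option maxHeartbeats 1000000 in
lemma scalar_bound {r D lam mu Rr : ℝ} (hr : 0 < r) (hD : 0 < D) (h2r : 2*r ≤ D)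
    (hlamdef : lam = r/D) (hmudef : mu = r^2/(2*D)) (hRdef : Rr = r/2 + mu) :
    lam⁻¹ * (1 + Real.sqrt 2 * (Real.pi/mu) * Rr) ≤ 11 * D^2 / r^2 := by
  have hlaminv : lam⁻¹ = D / r := by rw [hlamdef, inv_div]
  have hmu0 : 0 < mu := by rw [hmudef]; positivity
  have hfr : (Real.pi/mu) * Rr = Real.pi * (D/r + 1) := by
    rw [hRdef, hmudef]
    field_simp
  have hsq2 : Real.sqrt 2 < 1.5 := by
    rw [show (1.5:ℝ) = Real.sqrt (1.5^2) from (Real.sqrt_sq (by norm_num)).symm]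
    exact Real.sqrt_lt_sqrt (by norm_num) (by norm_num)
  have hpi := Real.pi_lt_d2
  have hpi0 := Real.pi_pos
  have hs20 : (0:ℝ) ≤ Real.sqrt 2 := Real.sqrt_nonneg 2
  have hc45 : Real.sqrt 2 * Real.pi ≤ 4.725 := by
    have h := mul_lt_mul'' hsq2 hpi hs20 hpi0.le
    norm_num at h
    linarith
  obtain ⟨s, hsdef⟩ : ∃ s : ℝ, s = D / r := ⟨_, rfl⟩
  have hs2 : 2 ≤ s := by rw [hsdef, le_div_iff₀ hr]; linarith
  have hs0 : 0 < s := by linarith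
  have hDr : 11 * D^2 / r^2 = 11 * s^2 := by
    rw [hsdef, div_pow]
    ring
  rw [hlaminv, hDr, show Real.sqrt 2 * (Real.pi/mu) * Rr
      = Real.sqrt 2 * ((Real.pi/mu) * Rr) by ring, hfr, ← hsdef]
  have ht0 : 0 ≤ Real.sqrt 2 * Real.pi := by positivity
  nlinarith [mul_le_mul_of_nonneg_right hc45 (sq_nonneg s),
    mul_le_mul_of_nonneg_right hc45 hs0.le,
    mul_le_mul_of_nonneg_right hs2 hs0.le]

lemma pax_eq (huu : ⟪u,u⟫ = 1) {x m : E} {r D lam c : ℝ} (hD : 0 < D) (hlamdef : lam = r/D)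
    (hxm : x - m = c • u) : shear u m (lam - 1) x - m = (lam * c) • u := by
  have hinner : ⟪x - m, u⟫ = c := by rw [hxm, real_inner_smul_left, huu, mul_one]
  have h : shear u m (lam-1) x - m = (x - m) + ((lam-1) * ⟪x - m, u⟫) • u := by
    simp only [shear]; abel
  rw [h, hinner, hxm]
  match_scalars
  ring

lemma rot_pi_smul (huu : ⟪u,u⟫ = 1) (hue : ⟪u,e⟫ = 0) (c : ℝ) :
    rotA u e Real.pi (c • u) = (-c) • u := by
  simp only [rotA, real_inner_smul_left, huu, hue, Real.cos_pi, Real.sin_pi, mul_one, mul_zero]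
  match_scalars <;> ring

lemma shear_of_smul (huu : ⟪u,u⟫ = 1) (m : E) (k c : ℝ) :
    shear u m k (m + c • u) = m + ((1+k)*c) • u := by
  have hinner : ⟪m + c • u - m, u⟫ = c := by
    rw [add_sub_cancel_left, real_inner_smul_left, huu, mul_one]
  simp only [shear, hinner]
  module

set_option maxHeartbeats 1000000 in
theorem stmt16 (d : ℕ) (hd : 2 ≤ d)
    (x y : EuclideanSpace ℝ (Fin d)) (hxy : x ≠ y)
    (r : ℝ) (hr : 0 < r) (hr2 : r ≤ dist y x / 2) :
    ∃ τ : EuclideanSpace ℝ (Fin d) → EuclideanSpace ℝ (Fin d),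
      IsBilipOn (11 * dist y x ^ 2 / r ^ 2) τ Set.univ ∧
      (∀ z, z ∉ (⋃ p ∈ segment ℝ x y, Metric.ball p r) → τ z = z) ∧
      τ x = y ∧ τ y = x := by
  classical
  set D : ℝ := dist y x with hDdef
  have hD : 0 < D := dist_pos.2 (fun h => hxy h.symm)
  have hDn : D = ‖y - x‖ := dist_eq_norm y x
  have h2r : 2 * r ≤ D := by linarith
  set u : EuclideanSpace ℝ (Fin d) := D⁻¹ • (y - x) with hudef
  have hyx : y - x = D • u := by
    rw [hudef, smul_smul, mul_inv_cancel₀ hD.ne', one_smul]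
  have huu : ⟪u, u⟫ = 1 := by
    rw [hudef, real_inner_smul_left, real_inner_smul_right, real_inner_self_eq_norm_sq, ← hDn]
    field_simp
  have hnu : ‖u‖ = 1 := norm_one_of_inner u huu
  have hu0 : u ≠ 0 := by
    intro h; rw [h, inner_zero_left] at huu; norm_num at huu
  obtain ⟨e, hee, hue⟩ : ∃ e : EuclideanSpace ℝ (Fin d), ⟪e, e⟫ = 1 ∧ ⟪u, e⟫ = 0 := by
    have hspan : (Submodule.span ℝ {u}) ≠ (⊤ : Submodule ℝ (EuclideanSpace ℝ (Fin d))) := by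
      intro h
      have h1 : Module.finrank ℝ (Submodule.span ℝ ({u} : Set (EuclideanSpace ℝ (Fin d)))) = 1 :=
        finrank_span_singleton hu0
      rw [h, finrank_top, finrank_euclideanSpace_fin] at h1
      omega
    obtain ⟨v, hv⟩ : ∃ v, v ∉ Submodule.span ℝ ({u} : Set (EuclideanSpace ℝ (Fin d))) := by
      by_contra h; push_neg at h; exact hspan (Submodule.eq_top_iff'.2 h)
    have he0u : ⟪u, v - ⟪u, v⟫ • u⟫ = 0 := by
      rw [inner_sub_right, real_inner_smul_right, huu, mul_one, sub_self]
    have he00 : v - ⟪u, v⟫ • u ≠ 0 := by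
      intro h
      apply hv
      have hveq : v = ⟪u, v⟫ • u := by rwa [sub_eq_zero] at h
      rw [hveq]
      exact Submodule.smul_mem _ _ (Submodule.mem_span_singleton_self u)
    have hne0 : ‖v - ⟪u, v⟫ • u‖ ≠ 0 := norm_ne_zero_iff.2 he00
    refine ⟨‖v - ⟪u, v⟫ • u‖⁻¹ • (v - ⟪u, v⟫ • u), ?_, ?_⟩
    · rw [real_inner_smul_left, real_inner_smul_right, real_inner_self_eq_norm_sq]
      rw [show ∀ aa : ℝ, aa⁻¹ * (aa⁻¹ * aa^2) = (aa⁻¹*aa)^2 from fun aa => by ring,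
        inv_mul_cancel₀ hne0, one_pow]
    · rw [real_inner_smul_right, he0u, mul_zero]
  set m : EuclideanSpace ℝ (Fin d) := x + (D/2) • u with hmdef
  have hxm : x - m = (-(D/2)) • u := by rw [hmdef]; module
  have hym : y - m = (D/2) • u := by
    have hy' : y = x + D • u := by rw [← hyx]; abel
    rw [hmdef, hy']; module
  set lam : ℝ := r / D with hlamdef
  have hlam0 : 0 < lam := div_pos hr hD
  have hlam1 : lam ≤ 1 := by rw [hlamdef, div_le_one hD]; linarith
  set mu : ℝ := r^2/(2*D) with hmudef
  have hmu0 : 0 < mu := by positivity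
  set Rr : ℝ := r/2 + mu with hRdef
  have hR0 : 0 < Rr := by positivity
  set θf : ℝ → ℝ := fun ρ => (Real.pi/mu) * max 0 (min mu (Rr - ρ)) with hθdef
  have hθ_supp : ∀ ρ, Rr ≤ ρ → θf ρ = 0 := by
    intro ρ hρ
    rw [hθdef]
    simp only
    have h1 : min mu (Rr - ρ) ≤ 0 := le_trans (min_le_right _ _) (by linarith)
    rw [max_eq_left h1, mul_zero]
  have hθ_lip : ∀ ρ₁ ρ₂, |θf ρ₁ - θf ρ₂| ≤ (Real.pi/mu) * |ρ₁ - ρ₂| := by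
    intro ρ₁ ρ₂
    rw [hθdef]
    simp only
    rw [← mul_sub, abs_mul, abs_of_nonneg (by positivity : (0:ℝ) ≤ Real.pi/mu)]
    refine mul_le_mul_of_nonneg_left ?_ (by positivity)
    calc |max 0 (min mu (Rr - ρ₁)) - max 0 (min mu (Rr - ρ₂))|
        ≤ |(Rr - ρ₁) - (Rr - ρ₂)| := clamp_lip mu _ _
      _ = |ρ₁ - ρ₂| := by rw [show (Rr - ρ₁) - (Rr - ρ₂) = -(ρ₁ - ρ₂) by ring, abs_neg]
  have hθ_half : θf (r/2) = Real.pi := by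
    rw [hθdef]
    simp only
    rw [show Rr - r/2 = mu by rw [hRdef]; ring, min_self, max_eq_right hmu0.le,
      div_mul_cancel₀ _ hmu0.ne']
  have hθ_supp' : ∀ ρ, Rr ≤ ρ → -(θf ρ) = 0 := fun ρ h => by rw [hθ_supp ρ h, neg_zero]
  have hθ_lip' : ∀ ρ₁ ρ₂, |(-(θf ρ₁)) - (-(θf ρ₂))| ≤ (Real.pi/mu) * |ρ₁ - ρ₂| := by
    intro ρ₁ ρ₂
    rw [show -(θf ρ₁) - -(θf ρ₂) = -(θf ρ₁ - θf ρ₂) by ring, abs_neg]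
    exact hθ_lip ρ₁ ρ₂
  have hscalar := scalar_bound hr hD h2r hlamdef hmudef hRdef
  have hM0 : (0:ℝ) < 11 * D^2 / r^2 := by positivity
  have hcc : (lam - 1) + (lam⁻¹ - 1) + (lam - 1) * (lam⁻¹ - 1) = 0 := by
    field_simp
    ring
  have hcc' : (lam⁻¹ - 1) + (lam - 1) + (lam⁻¹ - 1) * (lam - 1) = 0 := by
    linear_combination hcc
  obtain ⟨T, hT⟩ : ∃ T : (ℝ → ℝ) → EuclideanSpace ℝ (Fin d) → EuclideanSpace ℝ (Fin d),
      T = fun g z => shear u m (lam⁻¹ - 1)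
        (m + rotA u e (g ‖shear u m (lam - 1) z - m‖) (shear u m (lam - 1) z - m)) :=
    ⟨_, rfl⟩
  have hinv : ∀ z, T (fun ρ => -(θf ρ)) (T θf z) = z := by
    intro z
    simp only [hT]
    rw [shear_comp huu hcc m, add_sub_cancel_left, rotA_norm huu hee hue,
      rotA_neg_rotA huu hee hue,
      show m + (shear u m (lam - 1) z - m) = shear u m (lam - 1) z from by abel,
      shear_comp huu hcc' m]
  refine ⟨T θf, ?_, ?_, ?_, ?_⟩
  · -- bilipschitz
    intro a _ b _
    constructor
    · rw [one_div, inv_mul_le_iff₀ hM0]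
      calc dist a b = dist (T (fun ρ => -(θf ρ)) (T θf a)) (T (fun ρ => -(θf ρ)) (T θf b)) := by
            rw [hinv a, hinv b]
        _ ≤ (11 * D^2 / r^2) * dist (T θf a) (T θf b) := by
            rw [dist_eq_norm, dist_eq_norm]
            simp only [hT]
            exact lipF huu hee hue hlam0 hlam1 hmu0 hR0 _ hθ_supp' hθ_lip' hscalar _ _
    · rw [dist_eq_norm, dist_eq_norm]
      simp only [hT]
      exact lipF huu hee hue hlam0 hlam1 hmu0 hR0 θf hθ_supp hθ_lip hscalar a b
  · -- identity outside the capsule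
    intro z hz
    simp only [hT]
    have h1 : Rr ≤ ‖shear u m (lam - 1) z - m‖ := by
      by_contra h
      push_neg at h
      exact hz (capsule_mem huu hr hD h2r hyx hmdef hlamdef hmudef hRdef z h)
    rw [hθ_supp _ h1, rotA_zero,
      show m + (shear u m (lam - 1) z - m) = shear u m (lam - 1) z from by abel,
      shear_comp huu hcc' m]
  · -- τ x = y
    simp only [hT]
    rw [pax_eq huu hD hlamdef hxm,
      show lam * (-(D/2)) = -(r/2) from by rw [hlamdef]; field_simp; try ring,
      norm_smul, Real.norm_eq_abs, hnu, mul_one, abs_neg,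
      abs_of_nonneg (by linarith : (0:ℝ) ≤ r/2), hθ_half, rot_pi_smul huu hue, neg_neg,
      shear_of_smul huu m _ _,
      show (1 + (lam⁻¹ - 1)) * (r/2) = D/2 from by
        rw [hlamdef, inv_div]; field_simp; try ring,
      show m + (D/2) • u = y from by rw [← hym]; abel]
  · -- τ y = x
    simp only [hT]
    rw [pax_eq huu hD hlamdef hym,
      show lam * (D/2) = r/2 from by rw [hlamdef]; field_simp; try ring,
      norm_smul, Real.norm_eq_abs, hnu, mul_one,
      abs_of_nonneg (by linarith : (0:ℝ) ≤ r/2), hθ_half, rot_pi_smul huu hue,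
      shear_of_smul huu m _ _,
      show (1 + (lam⁻¹ - 1)) * (-(r/2)) = -(D/2) from by
        rw [hlamdef, inv_div]; field_simp; try ring,
      show m + (-(D/2)) • u = x from by rw [← hxm]; abel]

end
end

section
/- Let d ∈ ℕ, d ≥ 2, let r > 0, and let A ⊆ ℝ^d be an r-separated set. Then there exists a max{264d/r, 22r/(3d)}-bilipschitz mapping Φ : ℝ^d → ℝ^d such that Φ(A) ⊆ ℤ^d. -/
noncomputable section

/-- The integer lattice `ℤ^d ⊆ ℝ^d`. -/
def intLat (d : ℕ) : Set (EuclideanSpace ℝ (Fin d)) := {x | ∀ i, ∃ n : ℤ, x i = n}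

/-!
Scale `A` by a factor `s` so that it becomes `2√d`-separated. Every scaled point `p` lies within
`√d / 2` of the lattice point obtained by rounding its coordinates, and a cone of height
`round p - p` supported on the ball of radius `√d` around `p` is `1/2`-Lipschitz. Adding these
disjointly supported cones to the identity gives a map with bilipschitz constants `1/2` and `3/2`
that sends each scaled point of `A` to the lattice; composing with the scaling costs the factor
`s`, which fits under `max (264 d / r) (22 r / (3 d))` since that maximum is at least `44`, the
geometric mean of its two arguments.
-/

open scoped NNReal

section BumpField

variable {E : Type*} [NormedAddCommGroup E] [NormedSpace ℝ E]
  {P : Set E} {ρ : ℝ} {K : ℝ≥0} {v : E → E} {p z w : E}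

/-- On the ball of radius `ρ` around a centre `p ∈ P` this is the cone `(1 - dist z p / ρ) • v p`,
and it vanishes outside these balls; they are disjoint when `P` is `2ρ`-separated. -/
def bumpField (P : Set E) (ρ : ℝ) (v : E → E) (z : E) : E :=
  open Classical in
  if h : ∃ p ∈ P, dist z p < ρ then (1 - dist z h.choose / ρ) • v h.choose else 0

theorem bumpField_eq_of_dist_lt (hP : P.Pairwise fun p q => 2 * ρ ≤ dist p q)
    (hp : p ∈ P) (hz : dist z p < ρ) : bumpField P ρ v z = (1 - dist z p / ρ) • v p := by
  have h : ∃ p ∈ P, dist z p < ρ := ⟨p, hp, hz⟩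
  obtain ⟨hqP, hzq⟩ := h.choose_spec
  have hq : h.choose = p := by
    by_contra hne
    linarith [hP hqP hp hne, dist_triangle_left h.choose p z]
  rw [bumpField, dif_pos h, hq]

theorem bumpField_eq_zero (hz : ∀ p ∈ P, ρ ≤ dist z p) : bumpField P ρ v z = 0 := by
  have h : ¬ ∃ p ∈ P, dist z p < ρ := by simpa using hz
  rw [bumpField, dif_neg h]

theorem bumpField_self (hP : P.Pairwise fun p q => 2 * ρ ≤ dist p q) (hρ : 0 < ρ)
    (hp : p ∈ P) : bumpField P ρ v p = v p := by
  rw [bumpField_eq_of_dist_lt hP hp (by simpa using hρ), dist_self, zero_div, sub_zero,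
    one_smul]

theorem norm_bumpField_le_of_dist_lt (hP : P.Pairwise fun p q => 2 * ρ ≤ dist p q)
    (hρ : 0 < ρ) (hv : ∀ p ∈ P, ‖v p‖ ≤ K * ρ) (hp : p ∈ P) (hz : dist z p < ρ) :
    ‖bumpField P ρ v z‖ ≤ K * (ρ - dist z p) := by
  have hcoeff : 0 ≤ 1 - dist z p / ρ := by rw [sub_nonneg, div_le_one hρ]; exact hz.le
  rw [bumpField_eq_of_dist_lt hP hp hz, norm_smul, Real.norm_of_nonneg hcoeff]
  calc (1 - dist z p / ρ) * ‖v p‖ ≤ (1 - dist z p / ρ) * (K * ρ) := by gcongr; exact hv p hp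
    _ = K * (ρ - dist z p) := by field_simp

theorem norm_bumpField_le_of_le_dist (hP : P.Pairwise fun p q => 2 * ρ ≤ dist p q)
    (hρ : 0 < ρ) (hv : ∀ p ∈ P, ‖v p‖ ≤ K * ρ) (hp : p ∈ P) (hw : ρ ≤ dist w p) :
    ‖bumpField P ρ v w‖ ≤ K * (dist w p - ρ) := by
  by_cases hnear : ∃ q ∈ P, dist w q < ρ
  · obtain ⟨q, hq, hwq⟩ := hnear
    have hqp : q ≠ p := by rintro rfl; linarith
    calc ‖bumpField P ρ v w‖ ≤ K * (ρ - dist w q) := norm_bumpField_le_of_dist_lt hP hρ hv hq hwq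
      _ ≤ K * (dist w p - ρ) := by
        refine mul_le_mul_of_nonneg_left ?_ K.2
        linarith [hP hq hp hqp, dist_triangle_left q p w]
  · push Not at hnear
    rw [bumpField_eq_zero hnear, norm_zero]
    exact mul_nonneg K.2 (sub_nonneg.2 hw)

theorem dist_bumpField_le_of_dist_lt_of_dist_lt (hP : P.Pairwise fun p q => 2 * ρ ≤ dist p q)
    (hρ : 0 < ρ) (hv : ∀ p ∈ P, ‖v p‖ ≤ K * ρ) (hp : p ∈ P) (hz : dist z p < ρ)
    (hw : dist w p < ρ) : dist (bumpField P ρ v z) (bumpField P ρ v w) ≤ K * dist z w := by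
  rw [bumpField_eq_of_dist_lt hP hp hz, bumpField_eq_of_dist_lt hP hp hw, dist_eq_norm,
    ← sub_smul, norm_smul, Real.norm_eq_abs,
    show 1 - dist z p / ρ - (1 - dist w p / ρ) = (dist w p - dist z p) / ρ by ring, abs_div,
    abs_of_pos hρ]
  calc |dist w p - dist z p| / ρ * ‖v p‖ ≤ dist z w / ρ * (K * ρ) := by
        gcongr
        · rw [dist_comm z w]; exact abs_dist_sub_le w z p
        · exact hv p hp
    _ = K * dist z w := by field_simp

theorem dist_bumpField_le_of_dist_lt_of_le_dist (hP : P.Pairwise fun p q => 2 * ρ ≤ dist p q)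
    (hρ : 0 < ρ) (hv : ∀ p ∈ P, ‖v p‖ ≤ K * ρ) (hp : p ∈ P) (hz : dist z p < ρ)
    (hw : ρ ≤ dist w p) : dist (bumpField P ρ v z) (bumpField P ρ v w) ≤ K * dist z w :=
  calc dist (bumpField P ρ v z) (bumpField P ρ v w)
      ≤ ‖bumpField P ρ v z‖ + ‖bumpField P ρ v w‖ := dist_le_norm_add_norm _ _
    _ ≤ K * (ρ - dist z p) + K * (dist w p - ρ) := by
      gcongr
      · exact norm_bumpField_le_of_dist_lt hP hρ hv hp hz
      · exact norm_bumpField_le_of_le_dist hP hρ hv hp hw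
    _ ≤ K * dist z w := by
      rw [← mul_add]
      gcongr
      linarith [dist_triangle_left w p z]

theorem lipschitzWith_bumpField (hP : P.Pairwise fun p q => 2 * ρ ≤ dist p q) (hρ : 0 < ρ)
    (hv : ∀ p ∈ P, ‖v p‖ ≤ K * ρ) : LipschitzWith K (bumpField P ρ v) := by
  refine LipschitzWith.of_dist_le_mul fun z w => ?_
  by_cases hz : ∃ p ∈ P, dist z p < ρ
  · obtain ⟨p, hp, hzp⟩ := hz
    rcases lt_or_ge (dist w p) ρ with hwp | hwp
    · exact dist_bumpField_le_of_dist_lt_of_dist_lt hP hρ hv hp hzp hwp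
    · exact dist_bumpField_le_of_dist_lt_of_le_dist hP hρ hv hp hzp hwp
  · push Not at hz
    by_cases hw : ∃ p ∈ P, dist w p < ρ
    · obtain ⟨p, hp, hwp⟩ := hw
      rw [dist_comm, dist_comm z]
      exact dist_bumpField_le_of_dist_lt_of_le_dist hP hρ hv hp hwp (hz p hp)
    · push Not at hw
      rw [bumpField_eq_zero hz, bumpField_eq_zero hw, dist_self]
      positivity

end BumpField

section Perturbation

variable {F : Type*} [SeminormedAddCommGroup F] {g : F → F} {K : ℝ≥0}

theorem LipschitzWith.dist_add_self_le (hg : LipschitzWith K g) (x y : F) :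
    dist (x + g x) (y + g y) ≤ (1 + K) * dist x y := by
  linarith [dist_add_add_le x (g x) y (g y), hg.dist_le_mul x y]

theorem LipschitzWith.le_dist_add_self (hg : LipschitzWith K g) (x y : F) :
    (1 - K) * dist x y ≤ dist (x + g x) (y + g y) := by
  have := dist_sub_sub_le (x + g x) (g x) (y + g y) (g y)
  simp only [add_sub_cancel_right] at this
  linarith [hg.dist_le_mul x y]

theorem LipschitzWith.isBilipOn_smul_add [NormedSpace ℝ F] (hg : LipschitzWith K g) {s M : ℝ}
    (hs : 0 ≤ s) (hM_lower : 1 / M ≤ (1 - K) * s) (hM_upper : (1 + K) * s ≤ M) :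
    IsBilipOn M (fun x => s • x + g (s • x)) Set.univ := by
  intro x _ y _
  have hdist : dist (s • x) (s • y) = s * dist x y := by
    rw [dist_smul₀, Real.norm_of_nonneg hs]
  constructor
  · calc 1 / M * dist x y ≤ (1 - K) * (s * dist x y) := by
          rw [← mul_assoc]; gcongr
      _ ≤ _ := hdist ▸ hg.le_dist_add_self (s • x) (s • y)
  · calc _ ≤ (1 + K) * (s * dist x y) := hdist ▸ hg.dist_add_self_le (s • x) (s • y)
      _ ≤ M * dist x y := by rw [← mul_assoc]; gcongr

end Perturbation

section Rounding

variable {ι : Type*} [Fintype ι]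

def roundCoords (z : EuclideanSpace ℝ ι) : EuclideanSpace ℝ ι :=
  WithLp.toLp 2 fun i => (round (z i) : ℝ)

theorem roundCoords_mem_intLat {d : ℕ} (z : EuclideanSpace ℝ (Fin d)) :
    roundCoords z ∈ intLat d :=
  fun i => ⟨round (z i), rfl⟩

theorem norm_roundCoords_sub_le (z : EuclideanSpace ℝ ι) :
    ‖roundCoords z - z‖ ≤ √(Fintype.card ι) / 2 := by
  have hcoord (i : ι) : ‖(roundCoords z - z) i‖ ^ 2 ≤ (1 / 2) ^ 2 := by
    refine pow_le_pow_left₀ (norm_nonneg _) ?_ 2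
    simpa [roundCoords, abs_sub_comm] using abs_sub_round (z i)
  calc ‖roundCoords z - z‖ = √(∑ i, ‖(roundCoords z - z) i‖ ^ 2) := EuclideanSpace.norm_eq _
    _ ≤ √(∑ _i : ι, (1 / 2) ^ 2) := Real.sqrt_le_sqrt (Finset.sum_le_sum fun i _ => hcoord i)
    _ = √(Fintype.card ι) / 2 := by
      rw [Finset.sum_const, Finset.card_univ, nsmul_eq_mul, Real.sqrt_mul (Nat.cast_nonneg _),
        Real.sqrt_sq (by norm_num)]
      ring

end Rounding

theorem Set.Pairwise.smul_image {E : Type*} [SeminormedAddCommGroup E] [NormedSpace ℝ E]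
    {A : Set E} {r s : ℝ} (hA : A.Pairwise fun a b => r ≤ dist a b) (hs : 0 ≤ s) :
    ((s • ·) '' A).Pairwise fun p q => s * r ≤ dist p q := by
  rintro _ ⟨a, ha, rfl⟩ _ ⟨b, hb, rfl⟩ hab
  rw [dist_smul₀, Real.norm_of_nonneg hs]
  exact mul_le_mul_of_nonneg_left (hA ha hb (ne_of_apply_ne _ hab)) hs

theorem le_max_of_mul_eq_sq {a b c : ℝ} (ha : 0 ≤ a) (h : a * b = c ^ 2) : c ≤ max a b := by
  by_contra! hlt
  obtain ⟨hac, hbc⟩ := max_lt_iff.1 hlt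
  nlinarith [mul_le_mul_of_nonneg_left hbc.le ha]

theorem exists_isBilipOn_image_subset_intLat {d : ℕ} (hd : 0 < d) {r s M : ℝ}
    {A : Set (EuclideanSpace ℝ (Fin d))} (hA : A.Pairwise fun a b => r ≤ dist a b) (hs : 0 ≤ s)
    (hsr : 2 * √(d : ℝ) ≤ s * r) (hM_lower : 1 / M ≤ s / 2) (hM_upper : 3 / 2 * s ≤ M) :
    ∃ Φ : EuclideanSpace ℝ (Fin d) → EuclideanSpace ℝ (Fin d),
      IsBilipOn M Φ Set.univ ∧ Φ '' A ⊆ intLat d := by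
  have hρ : 0 < √(d : ℝ) := Real.sqrt_pos.2 (Nat.cast_pos.2 hd)
  have hsA : ((s • ·) '' A).Pairwise fun p q => 2 * √(d : ℝ) ≤ dist p q :=
    (hA.smul_image hs).mono' fun _ _ h => hsr.trans h
  set g := bumpField ((s • ·) '' A) √(d : ℝ) fun p => roundCoords p - p
  have hg : LipschitzWith (1 / 2) g := lipschitzWith_bumpField hsA hρ fun p _ => by
    simpa [div_eq_inv_mul] using norm_roundCoords_sub_le p
  refine ⟨fun x => s • x + g (s • x), hg.isBilipOn_smul_add hs ?_ ?_, ?_⟩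
  · norm_num at hM_lower ⊢
    linarith
  · norm_num at hM_upper ⊢
    exact hM_upper
  · rintro _ ⟨a, ha, rfl⟩
    have hga : g (s • a) = roundCoords (s • a) - s • a :=
      bumpField_self hsA hρ (Set.mem_image_of_mem _ ha)
    show s • a + g (s • a) ∈ intLat d
    rw [hga, add_sub_cancel]
    exact roundCoords_mem_intLat _

theorem stmt18 (d : ℕ) (hd : 2 ≤ d) (r : ℝ) (hr : 0 < r)
    (A : Set (EuclideanSpace ℝ (Fin d)))
    (hsep : ∀ a ∈ A, ∀ b ∈ A, a ≠ b → r ≤ dist a b) :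
    ∃ Φ : EuclideanSpace ℝ (Fin d) → EuclideanSpace ℝ (Fin d),
      IsBilipOn (max (264 * d / r) (22 * r / (3 * d))) Φ Set.univ ∧
      Φ '' A ⊆ intLat d := by
  have hd1 : (1 : ℝ) ≤ d := by exact_mod_cast (by omega : 1 ≤ d)
  have hsqrt : √(d : ℝ) ≤ d := (Real.sqrt_le_left (by positivity)).2 (by nlinarith)
  have hM : 44 ≤ max (264 * d / r) (22 * r / (3 * d)) :=
    le_max_of_mul_eq_sq (by positivity) (by field_simp; ring)
  refine exists_isBilipOn_image_subset_intLat (by omega) hsep (s := max (2 * √(d : ℝ) / r) 1)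
    (by positivity) ((div_le_iff₀ hr).1 (le_max_left _ _)) ?_ ?_
  · calc 1 / max (264 * d / r) (22 * r / (3 * d)) ≤ 1 / 2 :=
          one_div_le_one_div_of_le two_pos (by linarith)
      _ ≤ max (2 * √(d : ℝ) / r) 1 / 2 := by gcongr; exact le_max_right _ _
  · rw [mul_max_of_nonneg _ _ (by norm_num)]
    refine max_le ?_ (by linarith)
    calc 3 / 2 * (2 * √(d : ℝ) / r) = 3 * √(d : ℝ) / r := by ring
      _ ≤ 264 * d / r := by gcongr; linarith
      _ ≤ max (264 * d / r) (22 * r / (3 * d)) := le_max_left _ _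

end
end
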